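/- In the setting H = H₁ ⊕ H₂, Ω = [[Ω₁, Γ],[Γ†, Ω₂]] self-adjoint (finite-dimensional), the decoupled component H₁d = H₁ ⊖ O_{Ω₁}(range Γ) is itself Ω-invariant as a subspace of H; in particular Ω maps H₁d into H₁d. -/
import Mathlib


noncomputable section

open LinearMap Module

/-- The smallest `Ω`-invariant subspace containing a subset `S`. -/
def orbit {H : Type*} [NormedAddCommGroup H] [InnerProductSpace ℂ H]
    (Ω : H →ₗ[ℂ] H) (S : Set H) : Submodule ℂ H :=
  sInf {W : Submodule ℂ H | S ⊆ (W : Set H) ∧ ∀ x ∈ W, Ω x ∈ W}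

theorem orbit_invariant {H : Type*} [NormedAddCommGroup H] [InnerProductSpace ℂ H]
    (Ω : H →ₗ[ℂ] H) (S : Set H) : ∀ x ∈ orbit Ω S, Ω x ∈ orbit Ω S := by
  intro x hx
  simp only [orbit, Submodule.mem_sInf] at hx ⊢
  intro W hW
  exact hW.2 x (hx W hW)

variable (H₁ H₂ : Type*)
  [NormedAddCommGroup H₁] [InnerProductSpace ℂ H₁] [FiniteDimensional ℂ H₁]
  [NormedAddCommGroup H₂] [InnerProductSpace ℂ H₂] [FiniteDimensional ℂ H₂]

/-- The orthogonal direct sum `H = H₁ ⊕ H₂`. -/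
abbrev DirSum := WithLp 2 (H₁ × H₂)

/-- Isometric embedding of `H₁` into `H₁ ⊕ H₂`. -/
def emb1 : H₁ →ₗ[ℂ] DirSum H₁ H₂ :=
  (WithLp.linearEquiv 2 ℂ (H₁ × H₂)).symm.toLinearMap ∘ₗ LinearMap.inl ℂ H₁ H₂

/-- Isometric embedding of `H₂` into `H₁ ⊕ H₂`. -/
def emb2 : H₂ →ₗ[ℂ] DirSum H₁ H₂ :=
  (WithLp.linearEquiv 2 ℂ (H₁ × H₂)).symm.toLinearMap ∘ₗ LinearMap.inr ℂ H₁ H₂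

/-- Projection of `H₁ ⊕ H₂` onto the first coordinate. -/
def proj1 : DirSum H₁ H₂ →ₗ[ℂ] H₁ :=
  LinearMap.fst ℂ H₁ H₂ ∘ₗ (WithLp.linearEquiv 2 ℂ (H₁ × H₂)).toLinearMap

/-- Projection of `H₁ ⊕ H₂` onto the second coordinate. -/
def proj2 : DirSum H₁ H₂ →ₗ[ℂ] H₂ :=
  LinearMap.snd ℂ H₁ H₂ ∘ₗ (WithLp.linearEquiv 2 ℂ (H₁ × H₂)).toLinearMap

/-- The copy of `H₁` inside `H₁ ⊕ H₂`. -/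
def sub1 : Submodule ℂ (DirSum H₁ H₂) := LinearMap.range (emb1 H₁ H₂)

/-- The copy of `H₂` inside `H₁ ⊕ H₂`. -/
def sub2 : Submodule ℂ (DirSum H₁ H₂) := LinearMap.range (emb2 H₁ H₂)

variable {H₁ H₂}

/-- The block operator `Ω = [[Ω₁, Γ], [Γ†, Ω₂]]` acting on `H₁ ⊕ H₂` by
`Ω(v₁, v₂) = (Ω₁ v₁ + Γ v₂, Γ† v₁ + Ω₂ v₂)`. -/
def blockOp (Ω₁ : H₁ →ₗ[ℂ] H₁) (Ω₂ : H₂ →ₗ[ℂ] H₂) (Γ : H₂ →ₗ[ℂ] H₁) :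
    DirSum H₁ H₂ →ₗ[ℂ] DirSum H₁ H₂ :=
  emb1 H₁ H₂ ∘ₗ (Ω₁ ∘ₗ proj1 H₁ H₂ + Γ ∘ₗ proj2 H₁ H₂) +
    emb2 H₁ H₂ ∘ₗ (LinearMap.adjoint Γ ∘ₗ proj1 H₁ H₂ + Ω₂ ∘ₗ proj2 H₁ H₂)

/-- The decoupled component `H₁d = H₁ ⊖ O_{Ω₁}(range Γ)` is `Ω`-invariant as a subspace of
`H = H₁ ⊕ H₂`: the block operator `Ω` maps `H₁d` into `H₁d`. -/
theorem decoupled_component_invariant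
    (Ω₁ : H₁ →ₗ[ℂ] H₁) (hΩ₁ : Ω₁.IsSymmetric)
    (Ω₂ : H₂ →ₗ[ℂ] H₂) (hΩ₂ : Ω₂.IsSymmetric)
    (Γ : H₂ →ₗ[ℂ] H₁) :
    ∀ x ∈ Submodule.map (emb1 H₁ H₂) ((orbit Ω₁ (Set.range Γ))ᗮ),
      blockOp Ω₁ Ω₂ Γ x ∈ Submodule.map (emb1 H₁ H₂) ((orbit Ω₁ (Set.range Γ))ᗮ) := by
  have hS : Set.range Γ ⊆ (orbit Ω₁ (Set.range Γ) : Set H₁) := by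
    intro x hx
    simp only [orbit, SetLike.mem_coe, Submodule.mem_sInf]
    intro W hW
    exact hW.1 hx
  rintro x ⟨v, hv, rfl⟩
  have hv' := (Submodule.mem_orthogonal _ _).mp hv
  have hΓv : LinearMap.adjoint Γ v = 0 := by
    rw [← inner_self_eq_zero (𝕜 := ℂ)]
    rw [LinearMap.adjoint_inner_left]
    rw [← inner_conj_symm]
    rw [hv' _ (hS ⟨_, rfl⟩)]
    simp
  refine ⟨Ω₁ v, ?_, ?_⟩
  · refine (Submodule.mem_orthogonal _ _).mpr ?_
    intro u hu
    rw [← hΩ₁ u v]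
    exact hv' _ (orbit_invariant Ω₁ _ u hu)
  · simp [blockOp, emb1, emb2, proj1, proj2, hΓv]
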